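/- If v is (s'',M)-sparse and Δ is an (s,M)-sparse in levels index set (i.e., |Δ ∩ {M_{k−1}+1,…,M_k}| ≤ s_k for each k), then ‖P_Δ (I − A*A) v‖₂ ≤ δ_{s+s'',M} ‖v‖₂, where P_Δ denotes the coordinate projection onto the index set Δ. -/

import Mathlib

noncomputable section

open scoped BigOperators Classical

namespace SIL

/-- The index set of level `k` (0-indexed): indices `i` with `M k ≤ i < M (k+1)`. -/
def level (N : ℕ) (M : ℕ → ℕ) (k : ℕ) : Finset (Fin N) :=
  Finset.univ.filter fun i => M k ≤ (i : ℕ) ∧ (i : ℕ) < M (k + 1)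

/-- Validity of the sparsity levels `0 = M₀ < M₁ < ⋯ < M_r = N`. -/
def LevelsOK (N r : ℕ) (M : ℕ → ℕ) : Prop :=
  M 0 = 0 ∧ M r = N ∧ ∀ k < r, M k < M (k + 1)

/-- Support of a vector, as a finset. -/
def supp {N : ℕ} (x : Fin N → ℂ) : Finset (Fin N) :=
  Finset.univ.filter fun i => x i ≠ 0

/-- An `(s,M)`-sparse index set: at most `s k` indices in each level `k`. -/
def SparseSet (N r : ℕ) (M s : ℕ → ℕ) (Δ : Finset (Fin N)) : Prop :=
  ∀ k < r, (Δ ∩ level N M k).card ≤ s k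

/-- An `(s,M)`-sparse in levels vector. -/
def Sparse {N : ℕ} (r : ℕ) (M s : ℕ → ℕ) (x : Fin N → ℂ) : Prop :=
  SparseSet N r M s (supp x)

/-- Squared ℓ² norm. -/
def n2sq {ι : Type*} [Fintype ι] (x : ι → ℂ) : ℝ := ∑ i, ‖x i‖ ^ 2

/-- ℓ² norm. -/
def n2 {ι : Type*} [Fintype ι] (x : ι → ℂ) : ℝ := Real.sqrt (n2sq x)

/-- Weighted ℓ¹ norm. -/
def wn1 {ι : Type*} [Fintype ι] (w : ι → ℝ) (x : ι → ℂ) : ℝ := ∑ i, w i * ‖x i‖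

/-- Standard inner product `⟨x,y⟩ = ∑ xᵢ conj(yᵢ)`. -/
def inr {ι : Type*} [Fintype ι] (x y : ι → ℂ) : ℂ := ∑ i, x i * star (y i)

/-- Coordinate projection onto an index set. -/
def proj {N : ℕ} (Δ : Finset (Fin N)) (x : Fin N → ℂ) : Fin N → ℂ :=
  fun i => if i ∈ Δ then x i else 0

/-- The two-sided restricted isometry-in-levels inequality with constant `δ`. -/
def RIPBound {m N : ℕ} (A : Matrix (Fin m) (Fin N) ℂ) (r : ℕ) (M s : ℕ → ℕ) (δ : ℝ) : Prop :=
  ∀ x : Fin N → ℂ, Sparse r M s x →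
    (1 - δ) * n2sq x ≤ n2sq (A.mulVec x) ∧ n2sq (A.mulVec x) ≤ (1 + δ) * n2sq x

/-- The restricted isometry constant in levels `δ_{s,M}`: the smallest `δ ≥ 0`
satisfying the RIP-in-levels inequalities. -/
def ricl {m N : ℕ} (A : Matrix (Fin m) (Fin N) ℂ) (r : ℕ) (M s : ℕ → ℕ) : ℝ :=
  sInf {δ : ℝ | 0 ≤ δ ∧ RIPBound A r M s δ}

/-- Best `(s,M)`-term approximation error in the weighted ℓ¹ norm. -/
def bestApprox {N : ℕ} (r : ℕ) (M s : ℕ → ℕ) (w : Fin N → ℝ) (x : Fin N → ℂ) : ℝ :=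
  sInf {t : ℝ | ∃ z : Fin N → ℂ, Sparse r M s z ∧ t = wn1 w (x - z)}

/-- `ζ = ∑ₖ (w^{(k)})² sₖ`. -/
def zeta (r : ℕ) (s : ℕ → ℕ) (wl : ℕ → ℝ) : ℝ :=
  ∑ k ∈ Finset.range r, wl k ^ 2 * (s k : ℝ)

/-- `ξ = minₖ (w^{(k)})² sₖ`. -/
def xiMin (r : ℕ) (s : ℕ → ℕ) (wl : ℕ → ℝ) : ℝ :=
  if h : (Finset.range r).Nonempty then (Finset.range r).inf' h fun k => wl k ^ 2 * (s k : ℝ)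
  else 0

/-- `T` is a set collecting, within each level `k`, (the indices of) `s k`
largest-in-absolute-value entries of `z` (or all of the level if it is smaller). -/
def IsTopSet {N : ℕ} (r : ℕ) (M s : ℕ → ℕ) (z : Fin N → ℂ) (T : Finset (Fin N)) : Prop :=
  (∀ k < r, (T ∩ level N M k).card = min (s k) (level N M k).card) ∧
  (∀ k < r, ∀ i ∈ T ∩ level N M k, ∀ j ∈ level N M k \ T, ‖z j‖ ≤ ‖z i‖)

/-- `h` is a hard thresholding in levels `H_{s,M}(z)` of `z`. -/
def IsThresh {N : ℕ} (r : ℕ) (M s : ℕ → ℕ) (z h : Fin N → ℂ) : Prop :=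
  ∃ T : Finset (Fin N), IsTopSet r M s z T ∧ h = proj T z

/-- `X` is a sequence of IHTL iterates with data `(A, y)` and sparsities `(s, M)`. -/
def IHTLSeq {m N : ℕ} (A : Matrix (Fin m) (Fin N) ℂ) (r : ℕ) (M s : ℕ → ℕ)
    (y : Fin m → ℂ) (X : ℕ → Fin N → ℂ) : Prop :=
  ∀ n, IsThresh r M s (X n + A.conjTranspose.mulVec (y - A.mulVec (X n))) (X (n + 1))

/-- `X` is a sequence of CoSaMPL iterates with data `(A, y)` and sparsities `(s, M)`. -/
def CoSaMPLSeq {m N : ℕ} (A : Matrix (Fin m) (Fin N) ℂ) (r : ℕ) (M s : ℕ → ℕ)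
    (y : Fin m → ℂ) (X : ℕ → Fin N → ℂ) : Prop :=
  ∀ n, ∃ (T : Finset (Fin N)) (u : Fin N → ℂ),
    IsTopSet r M (fun k => 2 * s k) (A.conjTranspose.mulVec (y - A.mulVec (X n))) T ∧
    supp u ⊆ supp (X n) ∪ T ∧
    (∀ z : Fin N → ℂ, supp z ⊆ supp (X n) ∪ T → n2 (y - A.mulVec u) ≤ n2 (y - A.mulVec z)) ∧
    IsThresh r M s u (X (n + 1))

/-! ### Auxiliary lemmas for `stmt1` -/

lemma n2sq_nonneg' {ι : Type*} [Fintype ι] (x : ι → ℂ) : 0 ≤ n2sq x :=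
  Finset.sum_nonneg fun _ _ => sq_nonneg _

lemma n2_sq' {ι : Type*} [Fintype ι] (x : ι → ℂ) : n2 x ^ 2 = n2sq x :=
  Real.sq_sqrt (n2sq_nonneg' x)

lemma n2_nonneg' {ι : Type*} [Fintype ι] (x : ι → ℂ) : 0 ≤ n2 x := Real.sqrt_nonneg _

lemma n2sq_eq_zero_iff {ι : Type*} [Fintype ι] (x : ι → ℂ) : n2sq x = 0 ↔ x = 0 := by
  constructor
  · intro h
    funext i
    have := (Finset.sum_eq_zero_iff_of_nonneg (fun j _ => sq_nonneg ‖x j‖)).1 h i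
      (Finset.mem_univ i)
    simpa using this
  · intro h; simp [h, n2sq]

lemma n2sq_add' {ι : Type*} [Fintype ι] (x y : ι → ℂ) :
    n2sq (x + y) = n2sq x + n2sq y + 2 * (inr x y).re := by
  unfold n2sq inr
  rw [Complex.re_sum, Finset.mul_sum, ← Finset.sum_add_distrib, ← Finset.sum_add_distrib]
  refine Finset.sum_congr rfl fun i _ => ?_
  simp only [Pi.add_apply, Complex.sq_norm]
  rw [Complex.normSq_add]
  rfl

lemma n2sq_sub' {ι : Type*} [Fintype ι] (x y : ι → ℂ) :
    n2sq (x - y) = n2sq x + n2sq y - 2 * (inr x y).re := by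
  unfold n2sq inr
  rw [Complex.re_sum, Finset.mul_sum, ← Finset.sum_add_distrib, ← Finset.sum_sub_distrib]
  refine Finset.sum_congr rfl fun i _ => ?_
  simp only [Pi.sub_apply, Complex.sq_norm]
  rw [Complex.normSq_sub]
  rfl

lemma n2sq_real_smul {ι : Type*} [Fintype ι] (t : ℝ) (x : ι → ℂ) :
    n2sq ((t : ℂ) • x) = t ^ 2 * n2sq x := by
  unfold n2sq
  rw [Finset.mul_sum]
  refine Finset.sum_congr rfl fun i _ => ?_
  simp [mul_pow, Complex.norm_real]

lemma inr_real_smul_left {ι : Type*} [Fintype ι] (t : ℝ) (x y : ι → ℂ) :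
    inr ((t : ℂ) • x) y = (t : ℂ) * inr x y := by
  unfold inr
  rw [Finset.mul_sum]
  exact Finset.sum_congr rfl fun i _ => by simp; ring

lemma inr_sub_right' {ι : Type*} [Fintype ι] (x y z : ι → ℂ) :
    inr x (y - z) = inr x y - inr x z := by
  unfold inr
  rw [← Finset.sum_sub_distrib]
  refine Finset.sum_congr rfl fun i _ => ?_
  simp [star_sub, mul_sub]

lemma inr_adjoint' {m N : ℕ} (A : Matrix (Fin m) (Fin N) ℂ) (x : Fin N → ℂ) (y : Fin m → ℂ) :
    inr x (A.conjTranspose.mulVec y) = inr (A.mulVec x) y := by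
  unfold inr
  simp only [Matrix.mulVec, dotProduct, Matrix.conjTranspose_apply, star_sum,
    star_mul', star_star, Finset.mul_sum, Finset.sum_mul]
  rw [Finset.sum_comm]
  exact Finset.sum_congr rfl fun j _ => Finset.sum_congr rfl fun i _ => by ring

/-- The polarization / RIP key inequality. -/
lemma key_bilinear {m N : ℕ} {A : Matrix (Fin m) (Fin N) ℂ} {r : ℕ} {M s' : ℕ → ℕ} {δ : ℝ}
    (hδ : RIPBound A r M s' δ) (x y : Fin N → ℂ)
    (h1 : Sparse r M s' (x + y)) (h2 : Sparse r M s' (x - y)) :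
    (inr x y).re - (inr (A.mulVec x) (A.mulVec y)).re ≤ δ / 2 * (n2sq x + n2sq y) := by
  have e1 := n2sq_add' x y
  have e2 := n2sq_sub' x y
  have e3 : n2sq (A.mulVec (x + y)) =
      n2sq (A.mulVec x) + n2sq (A.mulVec y) + 2 * (inr (A.mulVec x) (A.mulVec y)).re := by
    rw [Matrix.mulVec_add]; exact n2sq_add' _ _
  have e4 : n2sq (A.mulVec (x - y)) =
      n2sq (A.mulVec x) + n2sq (A.mulVec y) - 2 * (inr (A.mulVec x) (A.mulVec y)).re := by
    rw [Matrix.mulVec_sub]; exact n2sq_sub' _ _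
  have h1' := hδ _ h1
  have h2' := hδ _ h2
  have d1 : n2sq (x + y) - n2sq (A.mulVec (x + y)) ≤ δ * n2sq (x + y) := by
    have := h1'.1; linarith
  have d2 : n2sq (A.mulVec (x - y)) - n2sq (x - y) ≤ δ * n2sq (x - y) := by
    have := h2'.2; linarith
  have hsum : δ * n2sq (x + y) + δ * n2sq (x - y) = δ * (2 * n2sq x + 2 * n2sq y) := by
    rw [e1, e2]; ring
  linarith

/-- `‖P_Δ (I − A*A) v‖₂ ≤ δ_{s+s'',M} ‖v‖₂` for `v` `(s'',M)`-sparse and `Δ`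
an `(s,M)`-sparse index set. -/
theorem stmt1 {m N : ℕ} (r : ℕ) (M s s'' : ℕ → ℕ) (hM : LevelsOK N r M)
    (A : Matrix (Fin m) (Fin N) ℂ) (v : Fin N → ℂ) (Δ : Finset (Fin N))
    (hv : Sparse r M s'' v) (hΔ : SparseSet N r M s Δ) :
    n2 (proj Δ (v - A.conjTranspose.mulVec (A.mulVec v))) ≤
      ricl A r M (fun k => s k + s'' k) * n2 v := by
  classical
  set w : Fin N → ℂ := v - A.conjTranspose.mulVec (A.mulVec v) with hw
  set u : Fin N → ℂ := proj Δ w with hu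
  -- the RIP set is nonempty
  set S : Set ℝ := {δ : ℝ | 0 ≤ δ ∧ RIPBound A r M (fun k => s k + s'' k) δ} with hSdef
  have hF : ∀ x : Fin N → ℂ, n2sq (A.mulVec x) ≤ (∑ i, ∑ j, ‖A i j‖ ^ 2) * n2sq x := by
    intro x
    unfold n2sq
    rw [Finset.sum_mul]
    refine Finset.sum_le_sum fun i _ => ?_
    calc ‖A.mulVec x i‖ ^ 2 = ‖∑ j, A i j * x j‖ ^ 2 := by
          simp [Matrix.mulVec, dotProduct]
      _ ≤ (∑ j, ‖A i j‖ * ‖x j‖) ^ 2 := by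
          refine pow_le_pow_left₀ (norm_nonneg _) ?_ 2
          refine (norm_sum_le _ _).trans_eq ?_
          exact Finset.sum_congr rfl fun j _ => norm_mul _ _
      _ ≤ (∑ j, ‖A i j‖ ^ 2) * ∑ j, ‖x j‖ ^ 2 :=
          Finset.sum_mul_sq_le_sq_mul_sq _ _ _
  have hne : S.Nonempty := by
    refine ⟨1 + ∑ i, ∑ j, ‖A i j‖ ^ 2, ?_, ?_⟩
    · have : (0:ℝ) ≤ ∑ i, ∑ j, ‖A i j‖ ^ 2 :=
        Finset.sum_nonneg fun _ _ => Finset.sum_nonneg fun _ _ => sq_nonneg _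
      linarith
    · intro x _
      have hFx := hF x
      have hF0 : (0:ℝ) ≤ ∑ i, ∑ j, ‖A i j‖ ^ 2 :=
        Finset.sum_nonneg fun _ _ => Finset.sum_nonneg fun _ _ => sq_nonneg _
      have hx0 := n2sq_nonneg' x
      have hAx0 := n2sq_nonneg' (A.mulVec x)
      constructor
      · nlinarith
      · nlinarith
  have hric0 : 0 ≤ ricl A r M (fun k => s k + s'' k) :=
    le_csInf hne fun δ hδ => hδ.1
  -- support lemma
  have huΔ : ∀ i, u i ≠ 0 → i ∈ Δ := by
    intro i hi
    by_contra h
    exact hi (by simp [hu, proj, h])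
  have hS : ∀ z : Fin N → ℂ, (∀ i, z i ≠ 0 → i ∈ Δ ∪ supp v) →
      Sparse r M (fun k => s k + s'' k) z := by
    intro z hz k hk
    have hsub : supp z ∩ level N M k ⊆ (Δ ∪ supp v) ∩ level N M k := by
      refine Finset.inter_subset_inter ?_ (subset_refl _)
      intro i hi
      exact hz i (by simpa [supp] using hi)
    calc (supp z ∩ level N M k).card ≤ ((Δ ∪ supp v) ∩ level N M k).card :=
          Finset.card_le_card hsub
      _ = ((Δ ∩ level N M k) ∪ (supp v ∩ level N M k)).card := by
          rw [Finset.union_inter_distrib_right]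
      _ ≤ (Δ ∩ level N M k).card + (supp v ∩ level N M k).card := Finset.card_union_le _ _
      _ ≤ s k + s'' k := add_le_add (hΔ k hk) (hv k hk)
  -- the key identity : n2sq u = Re⟨u, v⟩ - Re⟨Au, Av⟩
  have hid : (inr u v).re - (inr (A.mulVec u) (A.mulVec v)).re = n2sq u := by
    have h1 : inr u w = inr u v - inr (A.mulVec u) (A.mulVec v) := by
      rw [hw, inr_sub_right', inr_adjoint']
    have h2 : (inr u w).re = n2sq u := by
      unfold inr n2sq
      rw [Complex.re_sum]
      refine Finset.sum_congr rfl fun i _ => ?_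
      by_cases h : i ∈ Δ
      · simp [hu, proj, h, Complex.mul_conj, Complex.sq_norm]
      · simp [hu, proj, h]
    rw [← h2, h1]
    simp [Complex.sub_re]
  -- for every admissible δ we get the bound
  have hub : ∀ δ ∈ S, n2 u ≤ δ * n2 v := by
    rintro δ ⟨hδ0, hδ⟩
    by_cases hu0 : u = 0
    · rw [hu0]
      have : n2 (0 : Fin N → ℂ) = 0 := by simp [n2, n2sq]
      rw [this]
      exact mul_nonneg hδ0 (n2_nonneg' v)
    by_cases hv0 : v = 0
    · exfalso
      apply hu0
      funext i
      simp [hu, hw, hv0, proj, Matrix.mulVec_zero]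
    have hnu : 0 < n2 u := by
      rcases lt_or_eq_of_le (n2_nonneg' u) with h | h
      · exact h
      · exfalso
        apply hu0
        rw [← n2sq_eq_zero_iff]
        rw [← n2_sq', ← h]
        ring
    have hnv : 0 < n2 v := by
      rcases lt_or_eq_of_le (n2_nonneg' v) with h | h
      · exact h
      · exfalso
        apply hv0
        rw [← n2sq_eq_zero_iff, ← n2_sq', ← h]
        ring
    set t : ℝ := n2 v / n2 u with ht
    have hkey := key_bilinear hδ ((t : ℂ) • u) v
      (hS _ (by
        intro i hi
        by_cases h : i ∈ Δ
        · exact Finset.mem_union_left _ h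
        · refine Finset.mem_union_right _ ?_
          simp only [Pi.add_apply, Pi.smul_apply, smul_eq_mul] at hi
          have hui : u i = 0 := by
            by_contra hcon; exact h (huΔ i hcon)
          simp only [supp, Finset.mem_filter, Finset.mem_univ, true_and]
          intro hvi
          exact hi (by rw [hui, hvi]; ring)))
      (hS _ (by
        intro i hi
        by_cases h : i ∈ Δ
        · exact Finset.mem_union_left _ h
        · refine Finset.mem_union_right _ ?_
          simp only [Pi.sub_apply, Pi.smul_apply, smul_eq_mul] at hi
          have hui : u i = 0 := by
            by_contra hcon; exact h (huΔ i hcon)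
          simp only [supp, Finset.mem_filter, Finset.mem_univ, true_and]
          intro hvi
          exact hi (by rw [hui, hvi]; ring)))
    rw [inr_real_smul_left, A.mulVec_smul, inr_real_smul_left, n2sq_real_smul,
      Complex.re_ofReal_mul, Complex.re_ofReal_mul] at hkey
    have hkey2 : t * n2sq u ≤ δ / 2 * (t ^ 2 * n2sq u + n2sq v) := by
      have : t * (inr u v).re - t * (inr (A.mulVec u) (A.mulVec v)).re = t * n2sq u := by
        rw [← hid]; ring
      linarith
    rw [← n2_sq' u, ← n2_sq' v, ht] at hkey2
    have hL : n2 v / n2 u * n2 u ^ 2 = n2 v * n2 u := by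
      field_simp
    have hR : (n2 v / n2 u) ^ 2 * n2 u ^ 2 = n2 v ^ 2 := by
      field_simp
    rw [hL, hR] at hkey2
    -- now : n2 v * n2 u ≤ δ/2 * (n2 v ^2 + n2 v ^2) = δ * n2 v ^2
    have : n2 u * n2 v ≤ (δ * n2 v) * n2 v := by nlinarith
    exact le_of_mul_le_mul_right this hnv
  -- conclude via the infimum
  by_cases hv0 : v = 0
  · have hu0 : u = 0 := by
      funext i
      simp [hu, hw, hv0, proj, Matrix.mulVec_zero]
    rw [hu] at hu0 ⊢
    rw [hu0, hv0]
    simp [n2, n2sq]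
  · have hnv : 0 < n2 v := by
      rcases lt_or_eq_of_le (n2_nonneg' v) with h | h
      · exact h
      · exfalso
        apply hv0
        rw [← n2sq_eq_zero_iff, ← n2_sq', ← h]
        ring
    have hdiv : n2 u / n2 v ≤ ricl A r M (fun k => s k + s'' k) := by
      refine le_csInf hne fun δ hδ => ?_
      rw [div_le_iff₀ hnv]
      exact hub δ hδ
    calc n2 (proj Δ (v - A.conjTranspose.mulVec (A.mulVec v))) = n2 u := by rw [hu, hw]
      _ ≤ ricl A r M (fun k => s k + s'' k) * n2 v := by
          rw [← div_le_iff₀ hnv] at *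
          exact hdiv

end SIL
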